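/- Let d ≥ 2 be an integer and β > 0. Define ψ(y) = 2(d − 2) e^{β(1+y)} / (e^{2β} + e^{2βy}) and the scale density s(x) = (1 − x²)^{−1/2} · exp( − ∫_0^x ψ(y)/(1 − y²) dy ) for x ∈ (−1, 1). Then there exist constants 0 < c ≤ C and ε₀ ∈ (0, 1) such that for all ε ∈ (0, ε₀): c · ε^{−1/2 − (d−2)/(2 cosh(2β))} ≤ s(−1 + ε) ≤ C · ε^{−1/2 − (d−2)/(2 cosh(2β))}. -/

import Mathlib

open Real

/-- `ψ(y) = 2(d−2)e^{β(1+y)} / (e^{2β} + e^{2βy})`. -/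
noncomputable def psi (d : ℕ) (β y : ℝ) : ℝ :=
  2 * ((d : ℝ) - 2) * exp (β * (1 + y)) / (exp (2 * β) + exp (2 * β * y))

/-- Scale density `s(x) = (1 − x²)^{−1/2} exp(−∫₀ˣ ψ(y)/(1 − y²) dy)` of the
two-token overlap diffusion. -/
noncomputable def scaleDensity (d : ℕ) (β x : ℝ) : ℝ :=
  (1 - x ^ 2) ^ (-(1 / 2 : ℝ)) * exp (-∫ y in (0 : ℝ)..x, psi d β y / (1 - y ^ 2))

noncomputable def hfun (d : ℕ) (β y : ℝ) : ℝ :=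
  2 * ((d : ℝ) - 2) * exp (β * (1 + y)) / ((exp (2 * β) + exp (2 * β * y)) * (1 - y))

lemma hfun_neg_one (d : ℕ) (β : ℝ) :
    hfun d β (-1) = ((d : ℝ) - 2) / (2 * cosh (2 * β)) := by
  have h2 : exp (2*β) + exp (2*β*(-1)) = 2 * cosh (2*β) := by
    rw [show (2*β*(-1:ℝ)) = -(2*β) by ring, Real.cosh_eq]; ring
  simp only [hfun]
  rw [show β * (1 + (-1:ℝ)) = 0 by ring, Real.exp_zero, h2]
  have : (0:ℝ) < cosh (2*β) := Real.cosh_pos _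
  field_simp
  ring

lemma hfun_contDiffOn (d : ℕ) (β : ℝ) : ContDiffOn ℝ 1 (hfun d β) (Set.Iio 1) := by
  apply ContDiffOn.div
  · exact (ContDiff.contDiffOn (by fun_prop))
  · exact (ContDiff.contDiffOn (by fun_prop))
  · intro y hy
    have h1 : (0:ℝ) < exp (2*β) + exp (2*β*y) := by positivity
    have h2 : (0:ℝ) < 1 - y := by simp only [Set.mem_Iio] at hy; linarith
    positivity

lemma psi_div_eq (d : ℕ) (β y : ℝ) (h1 : -1 < y) (h2 : y < 1) :
    psi d β y / (1 - y ^ 2) = hfun d β y / (1 + y) := by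
  have hG : (0:ℝ) < exp (2*β) + exp (2*β*y) := by positivity
  simp only [psi, hfun]
  rw [div_div, div_div]
  congr 1
  ring

lemma hfun_bound (d : ℕ) (β : ℝ) :
    ∃ M : ℝ, 0 ≤ M ∧ ∀ y ∈ Set.Icc (-1:ℝ) 0,
      |hfun d β y - hfun d β (-1)| ≤ M * (1 + y) := by
  have hopen : IsOpen (Set.Iio (1:ℝ)) := isOpen_Iio
  have hsub : Set.Icc (-1:ℝ) 0 ⊆ Set.Iio 1 := fun y hy => by
    simp only [Set.mem_Icc] at hy; simp only [Set.mem_Iio]; linarith [hy.2]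
  have hcont : ContinuousOn (deriv (hfun d β)) (Set.Iio 1) :=
    (hfun_contDiffOn d β).continuousOn_deriv_of_isOpen hopen le_rfl
  obtain ⟨M, hM⟩ := (isCompact_Icc (a := (-1:ℝ)) (b := 0)).exists_bound_of_continuousOn
    (hcont.mono hsub)
  have hM0 : 0 ≤ M := le_trans (norm_nonneg _) (hM (-1) (by norm_num))
  refine ⟨M, hM0, fun y hy => ?_⟩
  have hdiff : ∀ x ∈ Set.Icc (-1:ℝ) 0, DifferentiableAt ℝ (hfun d β) x := fun x hx =>
    ((hfun_contDiffOn d β).differentiableOn one_ne_zero).differentiableAt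
      (hopen.mem_nhds (hsub hx))
  have := Convex.norm_image_sub_le_of_norm_deriv_le hdiff hM
    (convex_Icc _ _) (Set.left_mem_Icc.mpr (by norm_num)) hy
  calc |hfun d β y - hfun d β (-1)| ≤ M * ‖y - (-1)‖ := this
    _ = M * (1 + y) := by
        rw [Real.norm_eq_abs, abs_of_nonneg (by linarith [hy.1])]; ring

lemma continuous_psi (d : ℕ) (β : ℝ) : Continuous (psi d β) := by
  apply Continuous.div (by fun_prop) (by fun_prop)
  intro y; positivity

lemma integral_g (a x : ℝ) (hx : -1 < x) :
    ∫ y in (0:ℝ)..x, a / (1 + y) = a * log (1 + x) := by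
  have h1 : ∀ y : ℝ, a / (1+y) = a * (1+y)⁻¹ := fun y => div_eq_mul_inv a _
  simp_rw [h1]
  rw [intervalIntegral.integral_const_mul]
  have h2 := intervalIntegral.integral_comp_add_left (a := (0:ℝ)) (b := x)
    (fun u : ℝ => u⁻¹) 1
  rw [h2]
  norm_num
  rw [integral_inv_of_pos (by norm_num) (by linarith)]
  simp

/-- Left-boundary asymptotics of the scale density:
`s(−1 + ε) ≍ ε^{−1/2 − (d−2)/(2 cosh 2β)}`. -/
theorem scale_density_left_asymptotics (d : ℕ) (hd : 2 ≤ d) (β : ℝ) (hβ : 0 < β) :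
    ∃ c C : ℝ, 0 < c ∧ c ≤ C ∧ ∃ ε₀ : ℝ, 0 < ε₀ ∧ ε₀ < 1 ∧
      ∀ ε : ℝ, 0 < ε → ε < ε₀ →
        c * ε ^ (-(1 / 2 : ℝ) - ((d : ℝ) - 2) / (2 * cosh (2 * β)))
            ≤ scaleDensity d β (-1 + ε) ∧
        scaleDensity d β (-1 + ε)
            ≤ C * ε ^ (-(1 / 2 : ℝ) - ((d : ℝ) - 2) / (2 * cosh (2 * β))) := by
  obtain ⟨M, hM0, hMb⟩ := hfun_bound d β
  set a : ℝ := ((d : ℝ) - 2) / (2 * cosh (2 * β)) with ha_def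
  have ha_eq : hfun d β (-1) = a := hfun_neg_one d β
  have ha0 : 0 ≤ a := by
    apply div_nonneg
    · have : (2:ℝ) ≤ (d:ℝ) := by exact_mod_cast hd
      linarith
    · positivity
  refine ⟨(2:ℝ) ^ (-(1/2:ℝ)) * exp (-M), exp M, by positivity, ?_, 1/2, by norm_num,
    by norm_num, ?_⟩
  · have h1 : (2:ℝ) ^ (-(1/2:ℝ)) ≤ 1 :=
      Real.rpow_le_one_of_one_le_of_nonpos (by norm_num) (by norm_num)
    have h2 : exp (-M) ≤ exp M := Real.exp_le_exp.mpr (by linarith)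
    nlinarith [Real.exp_pos (-M), Real.rpow_nonneg (le_of_lt two_pos) (-(1/2:ℝ))]
  intro ε hε hε2
  set x : ℝ := -1 + ε with hx_def
  have hx1 : -1 < x := by simp [hx_def]; linarith
  have hx0 : x < 0 := by simp [hx_def]; linarith
  -- integrability
  have hIcc : Set.uIcc 0 x = Set.Icc x 0 := Set.uIcc_of_ge hx0.le
  have hIf : IntervalIntegrable (fun y => psi d β y / (1 - y ^ 2)) MeasureTheory.volume 0 x := by
    apply ContinuousOn.intervalIntegrable
    rw [hIcc]
    apply ContinuousOn.div (continuous_psi d β).continuousOn (by fun_prop)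
    intro y hy
    simp only [Set.mem_Icc] at hy
    have : -1 < y := lt_of_lt_of_le hx1 hy.1
    nlinarith [hy.2]
  have hIg : IntervalIntegrable (fun y => a / (1 + y)) MeasureTheory.volume 0 x := by
    apply ContinuousOn.intervalIntegrable
    rw [hIcc]
    apply ContinuousOn.div continuousOn_const (by fun_prop)
    intro y hy
    simp only [Set.mem_Icc] at hy
    have : -1 < y := lt_of_lt_of_le hx1 hy.1
    linarith
  -- remainder bound
  set R : ℝ := ∫ y in (0:ℝ)..x, (psi d β y / (1 - y ^ 2) - a / (1 + y)) with hR_def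
  have hRbound : |R| ≤ M := by
    have hnorm : ∀ y ∈ Set.uIoc (0:ℝ) x,
        ‖psi d β y / (1 - y ^ 2) - a / (1 + y)‖ ≤ M := by
      intro y hy
      rw [Set.uIoc_of_ge hx0.le] at hy
      obtain ⟨hy1, hy2⟩ := hy
      have hym1 : -1 < y := lt_trans hx1 hy1
      have hy1' : y < 1 := by linarith
      have hyp : 0 < 1 + y := by linarith
      rw [psi_div_eq d β y hym1 hy1', ← ha_eq, div_sub_div_same, Real.norm_eq_abs,
        abs_div, abs_of_pos hyp]
      rw [div_le_iff₀ hyp]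
      calc |hfun d β y - hfun d β (-1)| ≤ M * (1 + y) :=
            hMb y ⟨hym1.le, hy2⟩
        _ = M * (1 + y) := rfl
    have := intervalIntegral.norm_integral_le_of_norm_le_const hnorm
    rw [Real.norm_eq_abs] at this
    calc |R| ≤ M * |x - 0| := this
      _ ≤ M * 1 := by
          apply mul_le_mul_of_nonneg_left _ hM0
          rw [sub_zero, abs_of_neg hx0]
          simp [hx_def]; linarith
      _ = M := mul_one M
  -- integral decomposition
  have hsplit : (∫ y in (0:ℝ)..x, psi d β y / (1 - y ^ 2)) = a * log ε + R := by
    have := intervalIntegral.integral_sub hIf hIg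
    rw [hR_def]
    rw [this, integral_g a x hx1]
    have : (1:ℝ) + x = ε := by rw [hx_def]; ring
    rw [this]; ring
  -- prefactor
  have hpre : (1 : ℝ) - x ^ 2 = ε * (2 - ε) := by rw [hx_def]; ring
  have hεl1 : ε < 1 := by linarith
  have hpre_pos : 0 < ε * (2 - ε) := by nlinarith
  -- exp part
  have hexp : exp (-(a * log ε + R)) = ε ^ (-a) * exp (-R) := by
    rw [show -(a * log ε + R) = (-a) * log ε + (-R) by ring, Real.exp_add]
    congr 1
    rw [Real.rpow_def_of_pos hε]
    ring_nf
  have hs_eq : scaleDensity d β x = (ε * (2 - ε)) ^ (-(1/2:ℝ)) * (ε ^ (-a) * exp (-R)) := by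
    rw [scaleDensity, hpre, hsplit, hexp]
  have hexp_split : ε ^ (-(1 / 2 : ℝ) - a) = ε ^ (-(1/2:ℝ)) * ε ^ (-a) := by
    rw [← Real.rpow_add hε]; ring_nf
  constructor
  · -- lower bound
    rw [hs_eq, hexp_split]
    have hA : (2:ℝ) ^ (-(1/2:ℝ)) * ε ^ (-(1/2:ℝ)) ≤ (ε * (2 - ε)) ^ (-(1/2:ℝ)) := by
      rw [← Real.mul_rpow (by norm_num) hε.le]
      apply Real.rpow_le_rpow_of_nonpos hpre_pos (by nlinarith) (by norm_num)
    have hB : exp (-M) ≤ exp (-R) := Real.exp_le_exp.mpr (by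
      have := abs_le.mp hRbound; linarith [this.2])
    calc (2:ℝ) ^ (-(1/2:ℝ)) * exp (-M) * (ε ^ (-(1/2:ℝ)) * ε ^ (-a))
        = ((2:ℝ) ^ (-(1/2:ℝ)) * ε ^ (-(1/2:ℝ))) * (ε ^ (-a) * exp (-M)) := by ring
      _ ≤ (ε * (2 - ε)) ^ (-(1/2:ℝ)) * (ε ^ (-a) * exp (-R)) := by
          apply mul_le_mul hA _ (by positivity)
            (le_trans (by positivity) hA)
          apply mul_le_mul_of_nonneg_left hB (by positivity)
  · -- upper bound
    rw [hs_eq, hexp_split]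
    have hA : (ε * (2 - ε)) ^ (-(1/2:ℝ)) ≤ ε ^ (-(1/2:ℝ)) := by
      apply Real.rpow_le_rpow_of_nonpos hε (by nlinarith) (by norm_num)
    have hB : exp (-R) ≤ exp M := Real.exp_le_exp.mpr (by
      have := abs_le.mp hRbound; linarith [this.1])
    calc (ε * (2 - ε)) ^ (-(1/2:ℝ)) * (ε ^ (-a) * exp (-R))
        ≤ ε ^ (-(1/2:ℝ)) * (ε ^ (-a) * exp M) := by
          apply mul_le_mul hA _ (by positivity) (by positivity)
          apply mul_le_mul_of_nonneg_left hB (by positivity)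
      _ = exp M * (ε ^ (-(1/2:ℝ)) * ε ^ (-a)) := by ring
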